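/- Let 𝐂 and 𝐃 be premulticategories. The premulticategory morphisms f : 𝐂 → 𝐃 and their transformations form a category: for each f the family (id_f)_A := id_{fA} is a transformation f ⇒ f; for transformations η : f ⇒ g and ε : g ⇒ h, the family (ε∗η)_A := ε_A⟨η_A⟩ has all components central and is a transformation f ⇒ h; and this composition is associative and unital. -/

import Mathlib

universe u v

/-- A premulticategory (Staton–Levy): objects, multimaps indexed by a list of sources and a
target, identities, and a one-at-a-time substitution operation satisfying unit and
associativity laws. -/
structure PreMulticat : Type (max (u + 1) (v + 1)) where
  Obj : Type u
  Hom : List Obj → Obj → Type v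
  id : ∀ A : Obj, Hom [A] A
  subst : ∀ (Γ : List Obj) (A : Obj) (Γ' : List Obj) {B : Obj},
      Hom (Γ ++ (A :: Γ')) B → ∀ {Δ : List Obj}, Hom Δ A → Hom (Γ ++ (Δ ++ Γ')) B
  id_subst : ∀ {A : Obj} {Δ : List Obj} (u : Hom Δ A),
      subst [] A [] (id A) u
        = _root_.cast (congrArg (fun l => Hom l A) (List.append_nil Δ).symm) u
  subst_id : ∀ (Γ : List Obj) (A : Obj) (Γ' : List Obj) {B : Obj}
      (t : Hom (Γ ++ (A :: Γ')) B), subst Γ A Γ' t (id A) = t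
  subst_assoc : ∀ (Γ₁ : List Obj) (B : Obj) (Γ₁' : List Obj) {C : Obj}
      (t : Hom (Γ₁ ++ (B :: Γ₁')) C) (Γ₂ : List Obj) (A : Obj) (Γ₂' : List Obj)
      (u : Hom (Γ₂ ++ (A :: Γ₂')) B) {Δ : List Obj} (v : Hom Δ A),
      subst (Γ₁ ++ Γ₂) A (Γ₂' ++ Γ₁')
          (_root_.cast (congrArg (fun l => Hom l C) (by simp)) (subst Γ₁ B Γ₁' t u)) v
        = _root_.cast (congrArg (fun l => Hom l C) (by simp))
            (subst Γ₁ B Γ₁' t (subst Γ₂ A Γ₂' u v))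

namespace PreMulticat

variable (M : PreMulticat.{u, v})

/-- Transport of a multimap along an equality of contexts. -/
def cst {Γ Γ' : List M.Obj} {B : M.Obj} (h : Γ = Γ') (t : M.Hom Γ B) : M.Hom Γ' B :=
  _root_.cast (congrArg (fun l => M.Hom l B) h) t

/-- A multimap `u : Γ → A` is central if substituting it and any other multimap into any third
multimap can be done in either order (in both relative positions). -/
def Central {Γ : List M.Obj} {A : M.Obj} (u : M.Hom Γ A) : Prop :=
  (∀ (Δ₁ Δ₂ Δ₃ : List M.Obj) (B : M.Obj) {C : M.Obj}
      (t : M.Hom (Δ₁ ++ (A :: (Δ₂ ++ (B :: Δ₃)))) C) (Λ : List M.Obj) (v : M.Hom Λ B),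
      M.cst (by simp)
          (M.subst (Δ₁ ++ (Γ ++ Δ₂)) B Δ₃
            (M.cst (by simp) (M.subst Δ₁ A (Δ₂ ++ (B :: Δ₃)) t u)) v)
        = M.subst Δ₁ A (Δ₂ ++ (Λ ++ Δ₃))
            (M.cst (by simp) (M.subst (Δ₁ ++ (A :: Δ₂)) B Δ₃ (M.cst (by simp) t) v)) u)
  ∧ (∀ (Δ₁ Δ₂ Δ₃ : List M.Obj) (B : M.Obj) {C : M.Obj}
      (t' : M.Hom (Δ₁ ++ (B :: (Δ₂ ++ (A :: Δ₃)))) C) (Λ : List M.Obj) (v : M.Hom Λ B),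
      M.cst (by simp)
          (M.subst Δ₁ B (Δ₂ ++ (Γ ++ Δ₃))
            (M.cst (by simp) (M.subst (Δ₁ ++ (B :: Δ₂)) A Δ₃ (M.cst (by simp) t') u)) v)
        = M.subst (Δ₁ ++ (Λ ++ Δ₂)) A Δ₃
            (M.cst (by simp) (M.subst Δ₁ B (Δ₂ ++ (A :: Δ₃)) (M.cst (by simp) t') v)) u)

end PreMulticat

namespace PreMulticat

variable (M : PreMulticat.{u, v})

/-- The data of a single substitution: a multimap `hom : src → tgt` to be plugged in. -/
structure Sub : Type (max u v) where
  tgt : M.Obj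
  src : List M.Obj
  hom : M.Hom src tgt

variable {M}

/-- The context `A₁,…,Aₙ,Γ'` of targets of a list of substitutions, followed by `Γ'`. -/
def objCtx : List M.Sub → List M.Obj → List M.Obj
  | [], Γ' => Γ'
  | s :: L, Γ' => s.tgt :: objCtx L Γ'

/-- The context `Δ₁,…,Δₙ,Γ'` of sources of a list of substitutions, followed by `Γ'`. -/
def newCtx : List M.Sub → List M.Obj → List M.Obj
  | [], Γ' => Γ'
  | s :: L, Γ' => s.src ++ newCtx L Γ'

@[simp] theorem objCtx_nil (Γ' : List M.Obj) : objCtx ([] : List M.Sub) Γ' = Γ' := rfl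

@[simp] theorem objCtx_cons (s : M.Sub) (L : List M.Sub) (Γ' : List M.Obj) :
    objCtx (s :: L) Γ' = s.tgt :: objCtx L Γ' := rfl

@[simp] theorem newCtx_nil (Γ' : List M.Obj) : newCtx ([] : List M.Sub) Γ' = Γ' := rfl

@[simp] theorem newCtx_cons (s : M.Sub) (L : List M.Sub) (Γ' : List M.Obj) :
    newCtx (s :: L) Γ' = s.src ++ newCtx L Γ' := rfl

@[simp] theorem objCtx_eq (L : List M.Sub) (Γ' : List M.Obj) :
    objCtx L Γ' = L.map Sub.tgt ++ Γ' := by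
  induction L with
  | nil => rfl
  | cons s L ih => simp [ih]

@[simp] theorem newCtx_eq (L : List M.Sub) (Γ' : List M.Obj) :
    newCtx L Γ' = (L.map Sub.src).flatten ++ Γ' := by
  induction L with
  | nil => rfl
  | cons s L ih => simp [ih]

/-- Iterated substitution `t⟨Γ, u₁, …, uₙ, Γ'⟩`, defined recursively by substituting the last
multimap of the list `L` (the paper's recursion): `t⟨Γ,u₁,Γ'⟩ = t[Γ,u₁,Γ']` and
`t⟨Γ,u₁,…,uₙ,Γ'⟩ = t⟨Γ,u₁,…,u_{n-1},Aₙ,Γ'⟩[Γ,Δ₁,…,Δ_{n-1},uₙ,Γ']`. -/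
def isub (Γ : List M.Obj) (L : List M.Sub) :
    ∀ (Γ' : List M.Obj) {B : M.Obj}, M.Hom (Γ ++ objCtx L Γ') B → M.Hom (Γ ++ newCtx L Γ') B :=
  L.reverseRecOn (motive := fun L => ∀ (Γ' : List M.Obj) {B : M.Obj},
      M.Hom (Γ ++ objCtx L Γ') B → M.Hom (Γ ++ newCtx L Γ') B)
    (fun _ _ t => t)
    (fun L s ih Γ' _ t =>
      M.cst (by simp)
        (M.subst (Γ ++ newCtx L []) s.tgt Γ'
          (M.cst (by simp) (ih (s.tgt :: Γ') (M.cst (by simp) t))) s.hom))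

end PreMulticat

namespace PreMulticat

/-- A morphism of premulticategories: a map of objects together with maps of multimap-sets
preserving identities and substitution. -/
structure Hom' (M N : PreMulticat.{u, v}) : Type (max u v) where
  obj : M.Obj → N.Obj
  map : ∀ {Γ : List M.Obj} {B : M.Obj}, M.Hom Γ B → N.Hom (Γ.map obj) (obj B)
  map_id : ∀ A : M.Obj, map (M.id A) = N.id (obj A)
  map_subst : ∀ (Γ : List M.Obj) (A : M.Obj) (Γ' : List M.Obj) {B : M.Obj}
      (t : M.Hom (Γ ++ (A :: Γ')) B) {Δ : List M.Obj} (u : M.Hom Δ A),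
      map (M.subst Γ A Γ' t u)
        = N.cst (by simp)
            (N.subst (Γ.map obj) (obj A) (Γ'.map obj) (N.cst (by simp) (map t)) (map u))

/-- The image of a single substitution datum under a premulticategory morphism. -/
def Hom'.mapSub {M N : PreMulticat.{u, v}} (f : Hom' M N) (s : M.Sub) : N.Sub :=
  ⟨f.obj s.tgt, s.src.map f.obj, f.map s.hom⟩

@[simp] theorem Hom'.mapSub_tgt {M N : PreMulticat.{u, v}} (f : Hom' M N) (s : M.Sub) :
    (f.mapSub s).tgt = f.obj s.tgt := rfl

@[simp] theorem Hom'.mapSub_src {M N : PreMulticat.{u, v}} (f : Hom' M N) (s : M.Sub) :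
    (f.mapSub s).src = s.src.map f.obj := rfl

end PreMulticat

@[simp] theorem flatten_map_singleton {α : Type u} {β : Type v} (l : List α) (h : α → β) :
    (l.map (fun a => [h a])).flatten = l.map h := by
  induction l <;> simp [*]

namespace PreMulticat

/-- A transformation `η : f ⇒ g` between premulticategory morphisms: a family of central
unary multimaps `η_A : fA → gA` such that `η_B⟨f(t)⟩ = g(t)⟨η_{A₁},…,η_{Aₙ}⟩` for every
multimap `t : A₁,…,Aₙ → B`. -/
def IsTransf {M N : PreMulticat.{u, v}} (f g : Hom' M N)
    (η : ∀ A : M.Obj, N.Hom [f.obj A] (g.obj A)) : Prop :=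
  (∀ A : M.Obj, N.Central (η A)) ∧
  ∀ {Γ : List M.Obj} {B : M.Obj} (t : M.Hom Γ B),
    N.cst (Γ' := Γ.map f.obj) (by simp) (N.subst [] (f.obj B) [] (η B) (f.map t))
      = N.cst (by simp [Function.comp_def])
          (isub [] (Γ.map fun A => (⟨g.obj A, [f.obj A], η A⟩ : N.Sub)) []
            (N.cst (by simp [Function.comp_def]) (g.map t)))

end PreMulticat

namespace PreMulticat

variable {M : PreMulticat.{u, v}}

theorem heq_cst {Γ Γ' : List M.Obj} {B : M.Obj} (h : Γ = Γ') (t : M.Hom Γ B) :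
    HEq (M.cst h t) t := by subst h; rfl

theorem cst_eq_of_heq {Γ Γ' : List M.Obj} {B : M.Obj} (h : Γ = Γ')
    {x : M.Hom Γ B} {y : M.Hom Γ' B} (hxy : HEq x y) : M.cst h x = y := by
  subst h; exact eq_of_heq hxy

theorem subst_congr {Γ₁ Γ₂ Γ₁' Γ₂' : List M.Obj} {A B : M.Obj}
    (hΓ : Γ₁ = Γ₂) (hΓ' : Γ₁' = Γ₂')
    {t₁ : M.Hom (Γ₁ ++ (A :: Γ₁')) B} {t₂ : M.Hom (Γ₂ ++ (A :: Γ₂')) B} (ht : HEq t₁ t₂)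
    {Δ₁ Δ₂ : List M.Obj} (hΔ : Δ₁ = Δ₂)
    {u₁ : M.Hom Δ₁ A} {u₂ : M.Hom Δ₂ A} (hu : HEq u₁ u₂) :
    HEq (M.subst Γ₁ A Γ₁' t₁ u₁) (M.subst Γ₂ A Γ₂' t₂ u₂) := by
  subst hΓ; subst hΓ'; subst hΔ
  rw [eq_of_heq ht, eq_of_heq hu]

theorem id_subst' {A : M.Obj} {Δ : List M.Obj} (u : M.Hom Δ A) :
    HEq (M.subst [] A [] (M.id A) u) u := by
  rw [M.id_subst]; exact cast_heq _ _

theorem subst_assoc' (Γ₁ : List M.Obj) (B : M.Obj) (Γ₁' : List M.Obj) {C : M.Obj}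
    (t : M.Hom (Γ₁ ++ (B :: Γ₁')) C) (Γ₂ : List M.Obj) (A : M.Obj) (Γ₂' : List M.Obj)
    (u : M.Hom (Γ₂ ++ (A :: Γ₂')) B) {Δ : List M.Obj} (v : M.Hom Δ A)
    {T : M.Hom ((Γ₁ ++ Γ₂) ++ (A :: (Γ₂' ++ Γ₁'))) C} (hT : HEq T (M.subst Γ₁ B Γ₁' t u)) :
    HEq (M.subst (Γ₁ ++ Γ₂) A (Γ₂' ++ Γ₁') T v)
      (M.subst Γ₁ B Γ₁' t (M.subst Γ₂ A Γ₂' u v)) := by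
  have key := M.subst_assoc Γ₁ B Γ₁' t Γ₂ A Γ₂' u v
  refine HEq.trans ?_ ((heq_of_eq key).trans (cast_heq _ _))
  exact subst_congr rfl rfl (hT.trans (cast_heq _ _).symm) rfl HEq.rfl

end PreMulticat

namespace PreMulticat

variable {M : PreMulticat.{u, v}}

/-- HEq form of the first centrality clause. -/
theorem central₁ {Γ : List M.Obj} {A : M.Obj} {u : M.Hom Γ A} (hc : M.Central u)
    (Δ₁ Δ₂ Δ₃ : List M.Obj) (B : M.Obj) {C : M.Obj}
    (t : M.Hom (Δ₁ ++ (A :: (Δ₂ ++ (B :: Δ₃)))) C) (Λ : List M.Obj) (v : M.Hom Λ B)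
    {T₁ : M.Hom ((Δ₁ ++ (Γ ++ Δ₂)) ++ (B :: Δ₃)) C}
    (h₁ : HEq T₁ (M.subst Δ₁ A (Δ₂ ++ (B :: Δ₃)) t u))
    {T₂ : M.Hom ((Δ₁ ++ (A :: Δ₂)) ++ (B :: Δ₃)) C} (h₂ : HEq T₂ t)
    {T₃ : M.Hom (Δ₁ ++ (A :: (Δ₂ ++ (Λ ++ Δ₃)))) C}
    (h₃ : HEq T₃ (M.subst (Δ₁ ++ (A :: Δ₂)) B Δ₃ T₂ v)) :
    HEq (M.subst (Δ₁ ++ (Γ ++ Δ₂)) B Δ₃ T₁ v) (M.subst Δ₁ A (Δ₂ ++ (Λ ++ Δ₃)) T₃ u) := by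
  have key := hc.1 Δ₁ Δ₂ Δ₃ B t Λ v
  have l1 : HEq (M.subst (Δ₁ ++ (Γ ++ Δ₂)) B Δ₃ T₁ v)
      (M.subst (Δ₁ ++ (Γ ++ Δ₂)) B Δ₃
        (M.cst (by simp) (M.subst Δ₁ A (Δ₂ ++ (B :: Δ₃)) t u)) v) :=
    subst_congr rfl rfl (h₁.trans (heq_cst _ _).symm) rfl HEq.rfl
  refine (l1.trans ((heq_cst _ _).symm.trans (heq_of_eq key))).trans ?_
  refine subst_congr rfl rfl ?_ rfl HEq.rfl
  refine (heq_cst _ _).trans ?_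
  refine HEq.trans ?_ h₃.symm
  exact subst_congr rfl rfl ((heq_cst _ _).trans h₂.symm) rfl HEq.rfl

/-- HEq form of the second centrality clause. -/
theorem central₂ {Γ : List M.Obj} {A : M.Obj} {u : M.Hom Γ A} (hc : M.Central u)
    (Δ₁ Δ₂ Δ₃ : List M.Obj) (B : M.Obj) {C : M.Obj}
    (t' : M.Hom (Δ₁ ++ (B :: (Δ₂ ++ (A :: Δ₃)))) C) (Λ : List M.Obj) (v : M.Hom Λ B)
    {T₁ : M.Hom ((Δ₁ ++ (B :: Δ₂)) ++ (A :: Δ₃)) C} (h₁ : HEq T₁ t')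
    {T₂ : M.Hom (Δ₁ ++ (B :: (Δ₂ ++ (Γ ++ Δ₃)))) C}
    (h₂ : HEq T₂ (M.subst (Δ₁ ++ (B :: Δ₂)) A Δ₃ T₁ u))
    {T₃ : M.Hom (Δ₁ ++ (B :: (Δ₂ ++ (A :: Δ₃)))) C} (h₃ : HEq T₃ t')
    {T₄ : M.Hom ((Δ₁ ++ (Λ ++ Δ₂)) ++ (A :: Δ₃)) C}
    (h₄ : HEq T₄ (M.subst Δ₁ B (Δ₂ ++ (A :: Δ₃)) T₃ v)) :
    HEq (M.subst Δ₁ B (Δ₂ ++ (Γ ++ Δ₃)) T₂ v) (M.subst (Δ₁ ++ (Λ ++ Δ₂)) A Δ₃ T₄ u) := by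
  have key := hc.2 Δ₁ Δ₂ Δ₃ B t' Λ v
  have l1 : HEq (M.subst Δ₁ B (Δ₂ ++ (Γ ++ Δ₃)) T₂ v)
      (M.subst Δ₁ B (Δ₂ ++ (Γ ++ Δ₃))
        (M.cst (by simp) (M.subst (Δ₁ ++ (B :: Δ₂)) A Δ₃ (M.cst (by simp) t') u)) v) := by
    refine subst_congr rfl rfl (h₂.trans ?_) rfl HEq.rfl
    refine HEq.symm ?_
    refine (heq_cst _ _).trans ?_
    exact subst_congr rfl rfl ((heq_cst _ _).trans h₁.symm) rfl HEq.rfl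
  refine (l1.trans ((heq_cst _ _).symm.trans (heq_of_eq key))).trans ?_
  refine subst_congr rfl rfl ?_ rfl HEq.rfl
  refine (heq_cst _ _).trans ?_
  refine HEq.trans ?_ h₄.symm
  exact subst_congr rfl rfl ((heq_cst _ _).trans h₃.symm) rfl HEq.rfl

/-- The identity multimap is central. -/
theorem central_id (A : M.Obj) : M.Central (M.id A) := by
  constructor
  · intro Δ₁ Δ₂ Δ₃ B C t Λ v
    rw [M.subst_id, M.subst_id]
    refine cst_eq_of_heq _ ?_
    refine HEq.trans ?_ (heq_cst _ _).symm
    exact subst_congr (by simp) rfl ((heq_cst _ _).trans (heq_cst _ _).symm) rfl HEq.rfl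
  · intro Δ₁ Δ₂ Δ₃ B C t' Λ v
    rw [M.subst_id, M.subst_id]
    refine cst_eq_of_heq _ ?_
    refine HEq.trans ?_ (heq_cst _ _).symm
    refine subst_congr rfl (by simp) ?_ rfl HEq.rfl
    exact ((heq_cst _ _).trans (heq_cst _ _)).trans (heq_cst _ _).symm

end PreMulticat

namespace PreMulticat

variable {M : PreMulticat.{u, v}}

/-- Composition (substitution) of central unary multimaps is central. -/
theorem central_comp {A₁ A₂ A₃ : M.Obj} {η : M.Hom [A₁] A₂} {ε : M.Hom [A₂] A₃}
    (hη : M.Central η) (hε : M.Central ε) :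
    M.Central (M.subst [] A₂ [] ε η) := by
  constructor
  · intro Δ₁ Δ₂ Δ₃ B C t Λ v
    refine cst_eq_of_heq _ ?_
    have d1 : HEq
        (M.subst (Δ₁ ++ []) A₂ ([] ++ (Δ₂ ++ (B :: Δ₃)))
          (M.cst (by simp) (M.subst Δ₁ A₃ (Δ₂ ++ (B :: Δ₃)) t ε)) η)
        (M.subst Δ₁ A₃ (Δ₂ ++ (B :: Δ₃)) t (M.subst [] A₂ [] ε η)) :=
      subst_assoc' Δ₁ A₃ (Δ₂ ++ (B :: Δ₃)) t [] A₂ [] ε η (heq_cst _ _)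
    have step1 := central₁ hη Δ₁ Δ₂ Δ₃ B
      (M.cst (by simp) (M.subst Δ₁ A₃ (Δ₂ ++ (B :: Δ₃)) t ε)) Λ v
      (T₁ := M.cst (by simp)
        (M.subst Δ₁ A₃ (Δ₂ ++ (B :: Δ₃)) t (M.subst [] A₂ [] ε η)))
      (T₂ := M.cst (by simp) (M.subst Δ₁ A₃ (Δ₂ ++ (B :: Δ₃)) t ε))
      (T₃ := M.cst (by simp) (M.subst (Δ₁ ++ (A₂ :: Δ₂)) B Δ₃
        (M.cst (by simp) (M.subst Δ₁ A₃ (Δ₂ ++ (B :: Δ₃)) t ε)) v))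
      ((heq_cst _ _).trans (d1.symm.trans
        (subst_congr (by simp) (by simp)
          ((heq_cst _ _).trans (heq_cst _ _).symm) rfl HEq.rfl)))
      ((heq_cst _ _).trans (heq_cst _ _).symm)
      (heq_cst _ _)
    have step2 := central₁ hε Δ₁ Δ₂ Δ₃ B t Λ v
      (T₁ := M.cst (by simp) (M.subst Δ₁ A₃ (Δ₂ ++ (B :: Δ₃)) t ε))
      (T₂ := M.cst (by simp) t)
      (T₃ := M.cst (by simp) (M.subst (Δ₁ ++ (A₃ :: Δ₂)) B Δ₃ (M.cst (by simp) t) v))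
      (heq_cst _ _) (heq_cst _ _) (heq_cst _ _)
    have d2 : HEq
        (M.subst (Δ₁ ++ []) A₂ ([] ++ (Δ₂ ++ (Λ ++ Δ₃)))
          (M.cst (by simp) (M.subst Δ₁ A₃ (Δ₂ ++ (Λ ++ Δ₃))
            (M.cst (by simp) (M.subst (Δ₁ ++ (A₃ :: Δ₂)) B Δ₃ (M.cst (by simp) t) v)) ε)) η)
        (M.subst Δ₁ A₃ (Δ₂ ++ (Λ ++ Δ₃))
          (M.cst (by simp) (M.subst (Δ₁ ++ (A₃ :: Δ₂)) B Δ₃ (M.cst (by simp) t) v))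
          (M.subst [] A₂ [] ε η)) :=
      subst_assoc' Δ₁ A₃ (Δ₂ ++ (Λ ++ Δ₃)) _ [] A₂ [] ε η (heq_cst _ _)
    refine step1.trans ?_
    refine HEq.trans ?_ d2
    refine subst_congr (by simp) (by simp) ?_ rfl HEq.rfl
    exact (heq_cst _ _).trans (step2.trans (heq_cst _ _).symm)
  · intro Δ₁ Δ₂ Δ₃ B C t' Λ v
    refine cst_eq_of_heq _ ?_
    have d1 : HEq
        (M.subst ((Δ₁ ++ (B :: Δ₂)) ++ []) A₂ ([] ++ Δ₃)
          (M.cst (by simp)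
            (M.subst (Δ₁ ++ (B :: Δ₂)) A₃ Δ₃ (M.cst (by simp) t') ε)) η)
        (M.subst (Δ₁ ++ (B :: Δ₂)) A₃ Δ₃ (M.cst (by simp) t') (M.subst [] A₂ [] ε η)) :=
      subst_assoc' (Δ₁ ++ (B :: Δ₂)) A₃ Δ₃ _ [] A₂ [] ε η (heq_cst _ _)
    have step1 := central₂ hη Δ₁ Δ₂ Δ₃ B
      (M.cst (by simp) (M.subst (Δ₁ ++ (B :: Δ₂)) A₃ Δ₃ (M.cst (by simp) t') ε)) Λ v
      (T₁ := M.cst (by simp)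
        (M.subst (Δ₁ ++ (B :: Δ₂)) A₃ Δ₃ (M.cst (by simp) t') ε))
      (T₂ := M.cst (by simp)
        (M.subst (Δ₁ ++ (B :: Δ₂)) A₃ Δ₃ (M.cst (by simp) t') (M.subst [] A₂ [] ε η)))
      (T₃ := M.cst (by simp)
        (M.subst (Δ₁ ++ (B :: Δ₂)) A₃ Δ₃ (M.cst (by simp) t') ε))
      (T₄ := M.cst (by simp) (M.subst Δ₁ B (Δ₂ ++ (A₂ :: Δ₃))
        (M.cst (by simp)
          (M.subst (Δ₁ ++ (B :: Δ₂)) A₃ Δ₃ (M.cst (by simp) t') ε)) v))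
      ((heq_cst _ _).trans (heq_cst _ _).symm)
      ((heq_cst _ _).trans (d1.symm.trans
        (subst_congr (by simp) (by simp)
          ((heq_cst _ _).trans (heq_cst _ _).symm) rfl HEq.rfl)))
      ((heq_cst _ _).trans (heq_cst _ _).symm)
      (heq_cst _ _)
    have step2 := central₂ hε Δ₁ Δ₂ Δ₃ B t' Λ v
      (T₁ := M.cst (by simp) t')
      (T₂ := M.cst (by simp)
        (M.subst (Δ₁ ++ (B :: Δ₂)) A₃ Δ₃ (M.cst (by simp) t') ε))
      (T₃ := M.cst (by simp) t')
      (T₄ := M.cst (by simp)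
        (M.subst Δ₁ B (Δ₂ ++ (A₃ :: Δ₃)) (M.cst (by simp) t') v))
      (heq_cst _ _) (heq_cst _ _) (heq_cst _ _) (heq_cst _ _)
    have d2 : HEq
        (M.subst ((Δ₁ ++ (Λ ++ Δ₂)) ++ []) A₂ ([] ++ Δ₃)
          (M.cst (by simp) (M.subst (Δ₁ ++ (Λ ++ Δ₂)) A₃ Δ₃
            (M.cst (by simp)
              (M.subst Δ₁ B (Δ₂ ++ (A₃ :: Δ₃)) (M.cst (by simp) t') v)) ε)) η)
        (M.subst (Δ₁ ++ (Λ ++ Δ₂)) A₃ Δ₃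
          (M.cst (by simp) (M.subst Δ₁ B (Δ₂ ++ (A₃ :: Δ₃)) (M.cst (by simp) t') v))
          (M.subst [] A₂ [] ε η)) :=
      subst_assoc' (Δ₁ ++ (Λ ++ Δ₂)) A₃ Δ₃ _ [] A₂ [] ε η (heq_cst _ _)
    refine step1.trans ?_
    refine HEq.trans ?_ d2
    refine subst_congr (by simp) (by simp) ?_ rfl HEq.rfl
    exact (heq_cst _ _).trans (step2.trans (heq_cst _ _).symm)

end PreMulticat

namespace PreMulticat

variable {M : PreMulticat.{u, v}}

theorem isub_nil (Γ Γ' : List M.Obj) {B : M.Obj}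
    (t : M.Hom (Γ ++ objCtx ([] : List M.Sub) Γ') B) : isub Γ [] Γ' t = t := by
  unfold isub
  erw [List.reverseRecOn_nil]

theorem isub_concat (Γ : List M.Obj) (L : List M.Sub) (s : M.Sub) (Γ' : List M.Obj)
    {B : M.Obj} (t : M.Hom (Γ ++ objCtx (L ++ [s]) Γ') B) :
    isub Γ (L ++ [s]) Γ' t
      = M.cst (by simp) (M.subst (Γ ++ newCtx L []) s.tgt Γ'
          (M.cst (by simp) (isub Γ L (s.tgt :: Γ') (M.cst (by simp) t))) s.hom) := by
  unfold isub
  erw [List.reverseRecOn_concat]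

theorem isub_congr {Γ₁ Γ₂ : List M.Obj} {L₁ L₂ : List M.Sub} {Γ₁' Γ₂' : List M.Obj}
    {B : M.Obj} (hΓ : Γ₁ = Γ₂) (hL : L₁ = L₂) (hΓ' : Γ₁' = Γ₂')
    {t₁ : M.Hom (Γ₁ ++ objCtx L₁ Γ₁') B} {t₂ : M.Hom (Γ₂ ++ objCtx L₂ Γ₂') B}
    (ht : HEq t₁ t₂) :
    HEq (isub Γ₁ L₁ Γ₁' t₁) (isub Γ₂ L₂ Γ₂' t₂) := by
  subst hΓ; subst hL; subst hΓ'
  rw [eq_of_heq ht]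

theorem isub_concat' (Γ : List M.Obj) (L : List M.Sub) (s : M.Sub) (Γ' : List M.Obj)
    {B : M.Obj} (t : M.Hom (Γ ++ objCtx (L ++ [s]) Γ') B)
    {T : M.Hom (Γ ++ objCtx L (s.tgt :: Γ')) B} (hT : HEq T t)
    {U : M.Hom ((Γ ++ newCtx L []) ++ (s.tgt :: Γ')) B}
    (hU : HEq U (isub Γ L (s.tgt :: Γ') T)) :
    HEq (isub Γ (L ++ [s]) Γ' t) (M.subst (Γ ++ newCtx L []) s.tgt Γ' U s.hom) := by
  rw [isub_concat]
  refine (heq_cst _ _).trans ?_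
  refine subst_congr rfl rfl ?_ rfl HEq.rfl
  refine (heq_cst _ _).trans ?_
  refine HEq.trans ?_ hU.symm
  exact isub_congr rfl rfl rfl ((heq_cst _ _).trans hT.symm)

end PreMulticat

namespace PreMulticat

variable {M : PreMulticat.{u, v}}

/-- Iterated substitution of identities does nothing. -/
theorem isub_ids (Θ : List M.Obj) :
    ∀ (Γ Γ' : List M.Obj) {B : M.Obj}
      (t : M.Hom (Γ ++ objCtx (Θ.map fun A => (⟨A, [A], M.id A⟩ : M.Sub)) Γ') B),
      HEq (isub Γ (Θ.map fun A => (⟨A, [A], M.id A⟩ : M.Sub)) Γ' t) t := by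
  induction Θ using List.reverseRecOn with
  | nil => intro Γ Γ' B t; exact heq_of_eq (isub_nil Γ Γ' t)
  | append_singleton Θ a ih =>
    intro Γ Γ' B t
    have hmap : (Θ ++ [a]).map (fun A => (⟨A, [A], M.id A⟩ : M.Sub))
        = Θ.map (fun A => (⟨A, [A], M.id A⟩ : M.Sub)) ++ [(⟨a, [a], M.id a⟩ : M.Sub)] := by
      simp
    refine HEq.trans (isub_congr rfl hmap rfl
      (HEq.symm (heq_cst (by simp) t))) ?_
    refine HEq.trans (isub_concat' Γ _ _ Γ' (M.cst (by simp) t)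
      (T := M.cst (by simp) t) ((heq_cst _ _).trans (heq_cst _ _).symm)
      (U := M.cst (by simp) (isub Γ (Θ.map fun A => (⟨A, [A], M.id A⟩ : M.Sub)) (a :: Γ')
        (M.cst (by simp) t))) (heq_cst _ _)) ?_
    rw [M.subst_id]
    exact ((heq_cst _ _).trans (ih Γ (a :: Γ') _)).trans (heq_cst _ _)

/-- Outer (unary) substitution commutes with iterated substitution. -/
theorem isub_outer {B₀ C : M.Obj} (w : M.Hom [B₀] C) (L : List M.Sub) :
    ∀ (Γ' : List M.Obj) (t : M.Hom ([] ++ objCtx L Γ') B₀)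
      {T : M.Hom ([] ++ objCtx L Γ') C} (hT : HEq T (M.subst [] B₀ [] w t)),
      HEq (M.subst [] B₀ [] w (isub [] L Γ' t)) (isub [] L Γ' T) := by
  induction L using List.reverseRecOn with
  | nil =>
    intro Γ' t T hT
    rw [isub_nil, isub_nil]
    exact hT.symm
  | append_singleton L s ih =>
    intro Γ' t T hT
    have e1 : HEq (isub [] (L ++ [s]) Γ' t)
        (M.subst ([] ++ newCtx L []) s.tgt Γ'
          (M.cst (by simp) (isub [] L (s.tgt :: Γ') (M.cst (by simp) t))) s.hom) :=
      isub_concat' [] L s Γ' t (T := M.cst (by simp) t) (heq_cst _ _)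
        (U := M.cst (by simp) (isub [] L (s.tgt :: Γ') (M.cst (by simp) t))) (heq_cst _ _)
    refine HEq.trans (subst_congr rfl rfl HEq.rfl (by simp) e1) ?_
    refine HEq.trans (subst_assoc' [] B₀ [] w ([] ++ newCtx L []) s.tgt Γ'
      (M.cst (by simp) (isub [] L (s.tgt :: Γ') (M.cst (by simp) t))) s.hom
      (T := M.cst (by simp) (M.subst [] B₀ [] w
        (M.cst (by simp) (isub [] L (s.tgt :: Γ') (M.cst (by simp) t)))))
      (heq_cst _ _)).symm ?_
    refine HEq.trans ?_ (isub_concat' [] L s Γ' T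
      (T := M.cst (by simp) T) (heq_cst _ _)
      (U := M.cst (by simp) (isub [] L (s.tgt :: Γ') (M.cst (by simp) T)))
      (heq_cst _ _)).symm
    refine subst_congr (by simp) (by simp) ?_ rfl HEq.rfl
    refine (heq_cst _ _).trans ?_
    refine HEq.trans (subst_congr rfl rfl HEq.rfl (by simp) (heq_cst _ _)) ?_
    refine HEq.trans (ih (s.tgt :: Γ') (M.cst (by simp) t)
      (T := M.cst (by simp) T)
      (((heq_cst _ _).trans hT).trans (subst_congr rfl rfl HEq.rfl (by simp)
        (heq_cst _ _).symm))) ?_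
    exact (heq_cst _ _).symm

/-- A central multimap substituted after an iterated substitution can be pulled inside. -/
theorem isub_swap {Λv : List M.Obj} {Bv : M.Obj} {v : M.Hom Λv Bv} (hv : M.Central v)
    (L : List M.Sub) :
    ∀ (Γ Θ Γ' : List M.Obj) {C : M.Obj}
      (T : M.Hom (Γ ++ objCtx L (Θ ++ (Bv :: Γ'))) C)
      {T₁ : M.Hom ((Γ ++ newCtx L Θ) ++ (Bv :: Γ')) C}
      (h₁ : HEq T₁ (isub Γ L (Θ ++ (Bv :: Γ')) T))
      {T₂ : M.Hom ((Γ ++ objCtx L Θ) ++ (Bv :: Γ')) C} (h₂ : HEq T₂ T)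
      {T₃ : M.Hom (Γ ++ objCtx L (Θ ++ (Λv ++ Γ'))) C}
      (h₃ : HEq T₃ (M.subst (Γ ++ objCtx L Θ) Bv Γ' T₂ v)),
      HEq (M.subst (Γ ++ newCtx L Θ) Bv Γ' T₁ v) (isub Γ L (Θ ++ (Λv ++ Γ')) T₃) := by
  induction L using List.reverseRecOn with
  | nil =>
    intro Γ Θ Γ' C T T₁ h₁ T₂ h₂ T₃ h₃
    rw [isub_nil] at h₁
    rw [isub_nil]
    refine HEq.trans ?_ h₃.symm
    exact subst_congr rfl rfl (h₁.trans h₂.symm) rfl HEq.rfl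
  | append_singleton L s ih =>
    intro Γ Θ Γ' C T T₁ h₁ T₂ h₂ T₃ h₃
    have e1 : HEq (isub Γ (L ++ [s]) (Θ ++ (Bv :: Γ')) T)
        (M.subst (Γ ++ newCtx L []) s.tgt (Θ ++ (Bv :: Γ'))
          (M.cst (by simp) (isub Γ L (s.tgt :: (Θ ++ (Bv :: Γ'))) (M.cst (by simp) T)))
          s.hom) :=
      isub_concat' Γ L s (Θ ++ (Bv :: Γ')) T (T := M.cst (by simp) T) (heq_cst _ _)
        (U := M.cst (by simp) (isub Γ L (s.tgt :: (Θ ++ (Bv :: Γ'))) (M.cst (by simp) T)))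
        (heq_cst _ _)
    have c1 := central₂ hv (Γ ++ newCtx L []) Θ Γ' s.tgt
      (M.cst (by simp) (isub Γ L (s.tgt :: (Θ ++ (Bv :: Γ'))) (M.cst (by simp) T)))
      s.src s.hom
      (T₁ := M.cst (by simp) (isub Γ L (s.tgt :: (Θ ++ (Bv :: Γ'))) (M.cst (by simp) T)))
      (T₂ := M.cst (by simp) (M.subst ((Γ ++ newCtx L []) ++ (s.tgt :: Θ)) Bv Γ'
        (M.cst (by simp) (isub Γ L (s.tgt :: (Θ ++ (Bv :: Γ'))) (M.cst (by simp) T))) v))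
      (T₃ := M.cst (by simp) (isub Γ L (s.tgt :: (Θ ++ (Bv :: Γ'))) (M.cst (by simp) T)))
      (T₄ := M.cst (by simp)
        (M.subst (Γ ++ newCtx L []) s.tgt (Θ ++ (Bv :: Γ'))
          (M.cst (by simp) (isub Γ L (s.tgt :: (Θ ++ (Bv :: Γ'))) (M.cst (by simp) T)))
          s.hom))
      ((heq_cst _ _).trans (heq_cst _ _).symm)
      (heq_cst _ _)
      ((heq_cst _ _).trans (heq_cst _ _).symm)
      (heq_cst _ _)
    refine HEq.trans ?_ (HEq.trans c1.symm ?_)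
    · exact subst_congr (by simp) rfl
        (h₁.trans (e1.trans (heq_cst _ _).symm)) rfl HEq.rfl
    refine HEq.trans ?_ (isub_concat' Γ L s (Θ ++ (Λv ++ Γ')) T₃
      (T := M.cst (by simp) T₃) (heq_cst _ _)
      (U := M.cst (by simp) (isub Γ L (s.tgt :: (Θ ++ (Λv ++ Γ'))) (M.cst (by simp) T₃)))
      (heq_cst _ _)).symm
    refine subst_congr rfl rfl ?_ rfl HEq.rfl
    refine (heq_cst _ _).trans ?_
    refine HEq.trans ?_ (HEq.trans (ih Γ (s.tgt :: Θ) Γ' (M.cst (by simp) T)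
      (T₁ := M.cst (by simp) (isub Γ L (s.tgt :: (Θ ++ (Bv :: Γ'))) (M.cst (by simp) T)))
      (heq_cst _ _)
      (T₂ := M.cst (by simp) T) ((heq_cst _ _).trans (heq_cst _ _).symm)
      (T₃ := M.cst (by simp) (M.subst (Γ ++ objCtx L (s.tgt :: Θ)) Bv Γ'
        (M.cst (by simp) T) v))
      (heq_cst _ _)) ?_)
    · exact subst_congr (by simp) rfl
        ((heq_cst _ _).trans (heq_cst _ _).symm) rfl HEq.rfl
    refine HEq.trans ?_ (heq_cst _ _).symm
    refine isub_congr rfl rfl rfl ?_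
    refine (heq_cst _ _).trans ?_
    refine HEq.trans (subst_congr (by simp) rfl
      ((heq_cst _ _).trans h₂.symm) rfl HEq.rfl) ?_
    exact h₃.symm.trans (heq_cst _ _).symm

end PreMulticat

namespace PreMulticat

variable {M : PreMulticat.{u, v}}

/-- Fusion: iterated substitution of pointwise composites equals iterated substitution of
the outer family followed by the inner family, provided the outer family is central. -/
theorem isub_fuse {α : Type*} (F G H : α → M.Obj)
    (e : ∀ a, M.Hom [G a] (H a)) (n : ∀ a, M.Hom [F a] (G a))
    (he : ∀ a, M.Central (e a)) (Θ : List α) :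
    ∀ (Γ Γ' : List M.Obj) {C : M.Obj}
      (t : M.Hom (Γ ++ objCtx (Θ.map (fun a => (⟨H a, [F a], M.subst [] (G a) [] (e a) (n a)⟩ : M.Sub))) Γ') C)
      {T₁ : M.Hom (Γ ++ objCtx (Θ.map (fun a => (⟨H a, [G a], e a⟩ : M.Sub))) Γ') C}
      (h₁ : HEq T₁ t)
      {T₂ : M.Hom (Γ ++ objCtx (Θ.map (fun a => (⟨G a, [F a], n a⟩ : M.Sub))) Γ') C}
      (h₂ : HEq T₂ (isub Γ (Θ.map (fun a => (⟨H a, [G a], e a⟩ : M.Sub))) Γ' T₁)),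
      HEq (isub Γ (Θ.map (fun a => (⟨H a, [F a], M.subst [] (G a) [] (e a) (n a)⟩ : M.Sub))) Γ' t)
          (isub Γ (Θ.map (fun a => (⟨G a, [F a], n a⟩ : M.Sub))) Γ' T₂) := by
  induction Θ using List.reverseRecOn with
  | nil =>
    intro Γ Γ' C t T₁ h₁ T₂ h₂
    erw [isub_nil] at h₂
    erw [isub_nil, isub_nil]
    exact (h₂.trans h₁).symm
  | append_singleton Θ a ih =>
    intro Γ Γ' C t T₁ h₁ T₂ h₂
    have hmapc : (Θ ++ [a]).map (fun a => (⟨H a, [F a], M.subst [] (G a) [] (e a) (n a)⟩ : M.Sub)) = Θ.map (fun a => (⟨H a, [F a], M.subst [] (G a) [] (e a) (n a)⟩ : M.Sub)) ++ [(⟨H a, [F a], M.subst [] (G a) [] (e a) (n a)⟩ : M.Sub)] := by simp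
    have hmape : (Θ ++ [a]).map (fun a => (⟨H a, [G a], e a⟩ : M.Sub)) = Θ.map (fun a => (⟨H a, [G a], e a⟩ : M.Sub)) ++ [(⟨H a, [G a], e a⟩ : M.Sub)] := by simp
    have hmapn : (Θ ++ [a]).map (fun a => (⟨G a, [F a], n a⟩ : M.Sub)) = Θ.map (fun a => (⟨G a, [F a], n a⟩ : M.Sub)) ++ [(⟨G a, [F a], n a⟩ : M.Sub)] := by simp
    have ihc := ih Γ (H a :: Γ') (M.cst (by simp [Function.comp_def]) t)
      (T₁ := (M.cst (by simp [Function.comp_def]) t))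
      ((heq_cst _ _).trans (heq_cst _ _).symm)
      (T₂ := (M.cst (by simp [Function.comp_def]) (isub Γ (Θ.map (fun a => (⟨H a, [G a], e a⟩ : M.Sub))) (H a :: Γ') (M.cst (by simp [Function.comp_def]) t)))) (heq_cst _ _)
    have swap := isub_swap (he a) (Θ.map (fun a => (⟨G a, [F a], n a⟩ : M.Sub))) Γ [] Γ' (M.cst (by simp [Function.comp_def]) (isub Γ (Θ.map (fun a => (⟨H a, [G a], e a⟩ : M.Sub))) (H a :: Γ') (M.cst (by simp [Function.comp_def]) t)))
      (T₁ := (M.cst (by simp [Function.comp_def]) (isub Γ (Θ.map (fun a => (⟨G a, [F a], n a⟩ : M.Sub))) (H a :: Γ') (M.cst (by simp [Function.comp_def]) (isub Γ (Θ.map (fun a => (⟨H a, [G a], e a⟩ : M.Sub))) (H a :: Γ') (M.cst (by simp [Function.comp_def]) t)))))) (heq_cst _ _)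
      (T₂ := (M.cst (by simp [Function.comp_def]) (M.cst (by simp [Function.comp_def]) (isub Γ (Θ.map (fun a => (⟨H a, [G a], e a⟩ : M.Sub))) (H a :: Γ') (M.cst (by simp [Function.comp_def]) t))))) (heq_cst _ _)
      (T₃ := (M.cst (by simp [Function.comp_def]) (M.subst (Γ ++ objCtx (Θ.map (fun a => (⟨G a, [F a], n a⟩ : M.Sub))) []) (H a) Γ' (M.cst (by simp [Function.comp_def]) (M.cst (by simp [Function.comp_def]) (isub Γ (Θ.map (fun a => (⟨H a, [G a], e a⟩ : M.Sub))) (H a :: Γ') (M.cst (by simp [Function.comp_def]) t)))) (e a)))) (heq_cst _ _)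
    have concatE := isub_concat' Γ (Θ.map (fun a => (⟨H a, [G a], e a⟩ : M.Sub))) (⟨H a, [G a], e a⟩ : M.Sub) Γ' (M.cst (by simp [Function.comp_def]) T₁)
      (T := M.cst (by simp [Function.comp_def]) T₁) ((heq_cst _ _).trans (heq_cst _ _).symm)
      (U := (M.cst (by simp [Function.comp_def]) (isub Γ (Θ.map (fun a => (⟨H a, [G a], e a⟩ : M.Sub))) (H a :: Γ') (M.cst (by simp [Function.comp_def]) T₁)))) (heq_cst _ _)
    have concatN := isub_concat' Γ (Θ.map (fun a => (⟨G a, [F a], n a⟩ : M.Sub))) (⟨G a, [F a], n a⟩ : M.Sub) Γ' (M.cst (by simp [Function.comp_def]) T₂)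
      (T := M.cst (by simp [Function.comp_def]) T₂) ((heq_cst _ _).trans (heq_cst _ _).symm)
      (U := (M.cst (by simp [Function.comp_def]) (isub Γ (Θ.map (fun a => (⟨G a, [F a], n a⟩ : M.Sub))) (G a :: Γ') (M.cst (by simp [Function.comp_def]) T₂)))) (heq_cst _ _)
    refine HEq.trans (isub_congr rfl hmapc rfl (HEq.symm (heq_cst (by simp [Function.comp_def]) t))) ?_
    refine HEq.trans (isub_concat' Γ (Θ.map (fun a => (⟨H a, [F a], M.subst [] (G a) [] (e a) (n a)⟩ : M.Sub))) (⟨H a, [F a], M.subst [] (G a) [] (e a) (n a)⟩ : M.Sub) Γ' (M.cst (by simp [Function.comp_def]) t)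
      (T := (M.cst (by simp [Function.comp_def]) t)) ((heq_cst _ _).trans (heq_cst _ _).symm)
      (U := (M.cst (by simp [Function.comp_def]) (isub Γ (Θ.map (fun a => (⟨H a, [F a], M.subst [] (G a) [] (e a) (n a)⟩ : M.Sub))) (H a :: Γ') (M.cst (by simp [Function.comp_def]) t)))) (heq_cst _ _)) ?_
    refine HEq.trans (subst_assoc' (Γ ++ newCtx (Θ.map (fun a => (⟨H a, [F a], M.subst [] (G a) [] (e a) (n a)⟩ : M.Sub))) []) (H a) Γ' (M.cst (by simp [Function.comp_def]) (isub Γ (Θ.map (fun a => (⟨H a, [F a], M.subst [] (G a) [] (e a) (n a)⟩ : M.Sub))) (H a :: Γ') (M.cst (by simp [Function.comp_def]) t)))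
      [] (G a) [] (e a) (n a)
      (T := M.cst (by simp [Function.comp_def]) (M.subst (Γ ++ newCtx (Θ.map (fun a => (⟨H a, [F a], M.subst [] (G a) [] (e a) (n a)⟩ : M.Sub))) []) (H a) Γ' (M.cst (by simp [Function.comp_def]) (isub Γ (Θ.map (fun a => (⟨H a, [F a], M.subst [] (G a) [] (e a) (n a)⟩ : M.Sub))) (H a :: Γ') (M.cst (by simp [Function.comp_def]) t))) (e a)))
      (heq_cst _ _)).symm ?_
    refine HEq.trans ?_ ((concatN.symm).trans
      (isub_congr rfl hmapn.symm rfl (heq_cst _ _)))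
    refine subst_congr (by simp [Function.comp_def]) (by simp [Function.comp_def]) ?_ rfl HEq.rfl
    refine (heq_cst _ _).trans ?_
    refine HEq.trans ?_ (HEq.trans swap ?_)
    · exact subst_congr (by simp [Function.comp_def]) rfl
        (((heq_cst _ _).trans ihc).trans (heq_cst _ _).symm) rfl HEq.rfl
    refine HEq.trans ?_ (heq_cst _ _).symm
    refine isub_congr rfl rfl rfl ?_
    refine (heq_cst _ _).trans ?_
    refine HEq.trans ?_ ((heq_cst _ _).trans h₂).symm
    refine HEq.trans ?_ ((isub_congr rfl hmape rfl
      (HEq.symm (heq_cst (by simp [Function.comp_def]) T₁))).trans concatE).symm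
    refine subst_congr (by simp [Function.comp_def]) rfl ?_ rfl HEq.rfl
    refine ((heq_cst _ _).trans ((heq_cst _ _).trans ?_)).trans (heq_cst _ _).symm
    exact isub_congr rfl rfl rfl
      ((heq_cst _ _).trans (h₁.symm.trans (heq_cst _ _).symm))

end PreMulticat

open PreMulticat in
/-- for premulticategories `M`, `N`, the premulticategory morphisms `M → N` and
their transformations form a category: identities `(id_f)_A := id_{fA}` are transformations;
the composite `(ε∗η)_A := ε_A⟨η_A⟩` of transformations is a transformation (in particular its
components are central); and composition is unital and associative. -/
theorem stmt_13 (M N : PreMulticat.{u, v}) :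
    (∀ f : Hom' M N, IsTransf f f (fun A => N.id (f.obj A))) ∧
    (∀ (f g h : Hom' M N) (η : ∀ A, N.Hom [f.obj A] (g.obj A))
        (ε : ∀ A, N.Hom [g.obj A] (h.obj A)),
      IsTransf f g η → IsTransf g h ε →
        IsTransf f h (fun A => N.subst [] (g.obj A) [] (ε A) (η A))) ∧
    (∀ (f g : Hom' M N) (η : ∀ A, N.Hom [f.obj A] (g.obj A)), IsTransf f g η →
      (fun A => N.subst [] (f.obj A) [] (η A) (N.id (f.obj A))) = η) ∧
    (∀ (f g : Hom' M N) (η : ∀ A, N.Hom [f.obj A] (g.obj A)), IsTransf f g η →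
      (fun A => N.subst [] (g.obj A) [] (N.id (g.obj A)) (η A)) = η) ∧
    (∀ (f g h k : Hom' M N) (η : ∀ A, N.Hom [f.obj A] (g.obj A))
        (ε : ∀ A, N.Hom [g.obj A] (h.obj A)) (ζ : ∀ A, N.Hom [h.obj A] (k.obj A)),
      (fun A => N.subst [] (h.obj A) [] (ζ A) (N.subst [] (g.obj A) [] (ε A) (η A)))
        = (fun A => N.subst [] (g.obj A) [] (N.subst [] (h.obj A) [] (ζ A) (ε A)) (η A))) := by
  refine ⟨?_, ?_, ?_, ?_, ?_⟩
  · intro f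
    refine ⟨fun A => central_id _, ?_⟩
    intro Γ B t
    have hL : Γ.map (fun A => (⟨f.obj A, [f.obj A], N.id (f.obj A)⟩ : N.Sub))
        = (Γ.map f.obj).map (fun A => (⟨A, [A], N.id A⟩ : N.Sub)) := by
      simp [Function.comp_def]
    refine cst_eq_of_heq _ ?_
    refine (id_subst' _).trans ?_
    refine HEq.trans ?_ (heq_cst _ _).symm
    refine HEq.symm ?_
    refine HEq.trans (isub_congr rfl hL rfl
      ((heq_cst _ _).trans (HEq.symm (heq_cst (by simp [Function.comp_def]) (f.map t))))) ?_
    exact (isub_ids (Γ.map f.obj) [] [] _).trans (heq_cst _ _)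
  · intro f g h η ε hη hε
    refine ⟨fun A => central_comp (hη.1 A) (hε.1 A), ?_⟩
    intro Γ B t
    have hη' : HEq (N.subst [] (f.obj B) [] (η B) (f.map t))
        (isub [] (Γ.map fun A => (⟨g.obj A, [f.obj A], η A⟩ : N.Sub)) [] (N.cst (by simp [Function.comp_def]) (g.map t))) :=
      ((heq_cst _ _).symm.trans (heq_of_eq (hη.2 t))).trans (heq_cst _ _)
    have hε' : HEq (N.subst [] (g.obj B) [] (ε B) (g.map t))
        (isub [] (Γ.map fun A => (⟨h.obj A, [g.obj A], ε A⟩ : N.Sub)) [] (N.cst (by simp [Function.comp_def]) (h.map t))) :=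
      ((heq_cst _ _).symm.trans (heq_of_eq (hε.2 t))).trans (heq_cst _ _)
    have d := subst_assoc' [] (g.obj B) [] (ε B) [] (f.obj B) [] (η B) (f.map t)
      (T := N.subst [] (g.obj B) [] (ε B) (η B)) HEq.rfl
    have fuse := isub_fuse (M := N) f.obj g.obj h.obj ε η (fun A => hε.1 A) Γ [] []
      (N.cst (by simp [Function.comp_def]) (h.map t))
      (T₁ := (N.cst (by simp [Function.comp_def]) (h.map t))) ((heq_cst _ _).trans (heq_cst _ _).symm)
      (T₂ := (N.cst (by simp [Function.comp_def]) (isub [] (Γ.map fun A => (⟨h.obj A, [g.obj A], ε A⟩ : N.Sub)) [] (N.cst (by simp [Function.comp_def]) (h.map t))))) (heq_cst _ _)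
    refine cst_eq_of_heq _ ?_
    refine HEq.trans d ?_
    refine HEq.trans (subst_congr rfl rfl HEq.rfl (by simp [Function.comp_def]) hη') ?_
    refine HEq.trans (isub_outer (ε B) (Γ.map fun A => (⟨g.obj A, [f.obj A], η A⟩ : N.Sub)) [] (N.cst (by simp [Function.comp_def]) (g.map t))
      (T := (N.cst (by simp [Function.comp_def]) (N.subst [] (g.obj B) [] (ε B) (N.cst (by simp [Function.comp_def]) (g.map t))))) (heq_cst _ _)) ?_
    refine HEq.trans ?_ (fuse.symm.trans (heq_cst _ _).symm)
    exact isub_congr rfl rfl rfl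
      ((heq_cst _ _).trans ((subst_congr rfl rfl HEq.rfl (by simp [Function.comp_def])
        (heq_cst _ _)).trans (hε'.trans (heq_cst _ _).symm)))
  · intro f g η hη
    funext A
    exact N.subst_id [] _ [] (η A)
  · intro f g η hη
    funext A
    rw [N.id_subst]
    exact eq_of_heq (cast_heq _ _)
  · intro f g h k η ε ζ
    funext A
    exact eq_of_heq (subst_assoc' [] (h.obj A) [] (ζ A) [] (g.obj A) [] (ε A) (η A)
      (T := N.subst [] (h.obj A) [] (ζ A) (ε A)) HEq.rfl).symm
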